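/- A binary word w is an overlap-free square if and only if w is a conjugate (cyclic rotation) of μ^i(x) for some x ∈ {00, 11, 010010, 101101} and some i ≥ 0, where μ is the Thue-Morse morphism. -/

import Mathlib

/-- Thue–Morse morphism: μ(0)=01, μ(1)=10, encoding 0 = false, 1 = true. -/
def mu (w : List Bool) : List Bool := w.flatMap fun b => [b, !b]

/-- A word is an overlap if it has the form a·x·a·x·a for a letter a. -/
def IsOverlap (w : List Bool) : Prop :=
  ∃ (a : Bool) (x : List Bool), w = [a] ++ x ++ [a] ++ x ++ [a]

/-- A word contains an overlap as a factor. -/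
def HasOverlap (w : List Bool) : Prop := ∃ f, f <:+: w ∧ IsOverlap f

/-- A word is overlap-free if no factor is an overlap. -/
def OverlapFree (w : List Bool) : Prop := ∀ f, f <:+: w → ¬ IsOverlap f

/-!
Backward direction: every conjugate of `00`, `11`, `010010` and `101101` is overlap-free, and this
circular overlap-freeness passes from `z` to `μ z`. Even rotations of `μ z` are images
`μ (z.rotate j)`, overlap-free by Thue's lemma (an overlap in `μ w` of odd period is impossible
because `μ w` is made of the blocks `01` and `10`; one of even period pulls back to `w`). A factor
of an odd rotation lies in one of two such images, unless it is the whole word, of even length.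

Forward direction, by induction on `|x|` for an overlap-free square `x x`: for `|x| ≥ 6` the
periodic word `x x x ⋯` has no overlaps of period at most 3, which forces all its pairs of equal
adjacent letters to start at positions of one parity. Hence `|x|` is even and `x` rotated by at
most one letter is `μ y`, where `y y` is again overlap-free. Words shorter than 6 are checked
directly.
-/

open List

namespace List

variable {α : Type*}

theorem getD_take_of_lt {l : List α} {n i : ℕ} (d : α) (h : i < n) :
    (l.take n).getD i d = l.getD i d := by
  simp [getD_eq_getElem?_getD, h]

theorem getD_drop (l : List α) (n i : ℕ) (d : α) : (l.drop n).getD i d = l.getD (n + i) d := by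
  simp [getD_eq_getElem?_getD]

theorem getD_append_append_length {l f r : List α} {i : ℕ} (d : α) (hi : i < f.length) :
    (l ++ f ++ r).getD (l.length + i) d = f.getD i d := by
  rw [append_assoc, getD_append_right _ _ _ _ (by omega), Nat.add_sub_cancel_left,
    getD_append _ _ _ _ hi]

theorem rotate_append_self (l : List α) (k : ℕ) :
    (l ++ l).rotate k = l.rotate k ++ l.rotate k := by
  induction k with
  | zero => simp
  | succ k ih =>
    rw [← rotate_rotate, ih, ← rotate_rotate l k 1]
    cases l.rotate k <;> simp

theorem dropLast_rotate_infix (l : List α) {r : ℕ} (hr : r ≤ 1) :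
    (l.rotate r).dropLast <:+: l := by
  interval_cases r
  · simpa using (dropLast_prefix l).isInfix
  · cases l with
    | nil => simp
    | cons a l => simpa using (suffix_cons a l).isInfix

end List

theorem Bool.eq_of_ne_of_ne {a b c : Bool} (h₁ : a ≠ b) (h₂ : b ≠ c) : a = c := by
  cases a <;> cases b <;> cases c <;> simp_all

/-- `OverlapAt f s p`: the letters `f s, …, f (s + 2p)` form an overlap of period `p`. -/
def OverlapAt (f : ℕ → Bool) (s p : ℕ) : Prop := ∀ i ≤ p, f (s + i) = f (s + i + p)

instance (f : ℕ → Bool) (s p : ℕ) : Decidable (OverlapAt f s p) := by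
  unfold OverlapAt; infer_instance

theorem isOverlap_iff_overlapAt {f : List Bool} :
    IsOverlap f ↔ ∃ p, 0 < p ∧ f.length = 2 * p + 1 ∧ OverlapAt (f.getD · false) 0 p := by
  constructor
  · rintro ⟨a, x, rfl⟩
    refine ⟨x.length + 1, by omega, by simp; omega, fun i hi => ?_⟩
    have hf : [a] ++ x ++ [a] ++ x ++ [a] = (a :: x) ++ ((a :: x) ++ [a]) := by simp
    simp only [hf, zero_add]
    rw [getD_append_right _ _ _ (i + _) (by simp)]
    rcases hi.lt_or_eq with hi | rfl
    · rw [getD_append _ _ _ _ (by simp; omega), getD_append _ _ _ _ (by simp; omega)]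
      simp
    · simp
  · rintro ⟨p, hp, hlen, hper⟩
    simp only [OverlapAt, zero_add] at hper
    obtain ⟨x, hx⟩ : ∃ x, f.take p = f.getD 0 false :: x := by
      obtain ⟨q, rfl⟩ := Nat.exists_eq_add_one_of_ne_zero hp.ne'
      cases f with
      | nil => simp at hlen
      | cons a t => exact ⟨t.take q, rfl⟩
    refine ⟨f.getD 0 false, x, ?_⟩
    have hsq : f = f.take p ++ f.take p ++ [f.getD 0 false] := by
      apply ext_getElem (by simp; omega)
      intro i h₁ h₂
      rw [← getD_eq_getElem _ false, ← getD_eq_getElem _ false]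
      have htake : (f.take p).length = p := by simp; omega
      rcases lt_or_ge i (2 * p) with hi | hi
      · rw [getD_append _ _ _ _ (by simp; omega)]
        rcases lt_or_ge i p with hi' | hi'
        · rw [getD_append _ _ _ _ (by omega), getD_take_of_lt _ hi']
        · rw [getD_append_right _ _ _ _ (by omega), htake, getD_take_of_lt _ (by omega)]
          rw [hper (i - p) (by omega), Nat.sub_add_cancel hi']
      · rw [getD_append_right _ _ _ _ (by simp; omega), show i = p + p by omega,
          ← hper p le_rfl, length_append, htake, Nat.sub_self]
        simpa using (hper 0 (by omega)).symm
    rw [hsq, hx]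
    simp

theorem overlapFree_iff_forall_not_overlapAt {w : List Bool} :
    OverlapFree w ↔
      ∀ s p, 0 < p → s + 2 * p < w.length → ¬ OverlapAt (w.getD · false) s p := by
  constructor
  · intro hw s p hp hs hov
    refine hw ((w.drop s).take (2 * p + 1))
      ((take_prefix _ _).isInfix.trans (drop_suffix _ _).isInfix)
      (isOverlap_iff_overlapAt.2 ⟨p, hp, by simp; omega, fun i hi => ?_⟩)
    simp only [zero_add]
    rw [getD_take_of_lt _ (by omega), getD_take_of_lt _ (by omega), getD_drop, getD_drop,
      ← add_assoc]
    exact hov i hi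
  · rintro h f ⟨l, r, rfl⟩ hov
    obtain ⟨p, hp, hlen, hper⟩ := isOverlap_iff_overlapAt.1 hov
    refine h l.length p hp (by simp; omega) fun i hi => ?_
    simp only [add_assoc]
    rw [getD_append_append_length _ (by omega), getD_append_append_length _ (by omega)]
    simpa only [zero_add] using hper i hi

theorem overlapFree_iff_forall_lt {w : List Bool} : OverlapFree w ↔
    ∀ s < w.length, ∀ p < w.length, 0 < p → s + 2 * p < w.length →
      ¬ OverlapAt (w.getD · false) s p := by
  rw [overlapFree_iff_forall_not_overlapAt]
  exact ⟨fun h s _ p _ => h s p, fun h s p hp hs => h s (by omega) p (by omega) hp hs⟩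

instance : DecidablePred OverlapFree := fun _ =>
  decidable_of_iff _ overlapFree_iff_forall_lt.symm

theorem OverlapFree.of_infix {v w : List Bool} (h : OverlapFree w) (hvw : v <:+: w) :
    OverlapFree v :=
  fun f hf => h f (hf.trans hvw)

theorem IsOverlap.odd_length {f : List Bool} (h : IsOverlap f) : Odd f.length := by
  obtain ⟨p, -, hlen, -⟩ := isOverlap_iff_overlapAt.1 h
  exact ⟨p, hlen⟩

theorem mu_cons (a : Bool) (l : List Bool) : mu (a :: l) = a :: (!a) :: mu l := rfl

theorem mu_append (l l' : List Bool) : mu (l ++ l') = mu l ++ mu l' := by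
  simp [mu]

@[simp]
theorem length_mu (l : List Bool) : (mu l).length = 2 * l.length := by
  induction l with
  | nil => rfl
  | cons a l ih => simp [mu_cons, ih]; ring

theorem getD_mu_two_mul (l : List Bool) (t : ℕ) :
    (mu l).getD (2 * t) false = l.getD t false := by
  induction l generalizing t with
  | nil => simp [mu]
  | cons a l ih => cases t with
    | zero => rfl
    | succ t => simpa [mu_cons, Nat.mul_succ] using ih t

theorem getD_mu_two_mul_add_one {l : List Bool} {t : ℕ} (ht : t < l.length) :
    (mu l).getD (2 * t + 1) false = !l.getD t false := by
  induction l generalizing t with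
  | nil => simp at ht
  | cons a l ih => cases t with
    | zero => rfl
    | succ t => simpa [mu_cons, Nat.mul_succ] using ih (by simpa using ht)

theorem getD_mu_succ_ne {l : List Bool} {j : ℕ} (hj : Even j) (hlen : j + 1 < (mu l).length) :
    (mu l).getD (j + 1) false ≠ (mu l).getD j false := by
  obtain ⟨t, rfl⟩ := hj
  rw [← two_mul, getD_mu_two_mul_add_one (by simp at hlen; omega), getD_mu_two_mul]
  simp

theorem mu_rotate (l : List Bool) (k : ℕ) : mu (l.rotate k) = (mu l).rotate (2 * k) := by
  induction k with
  | zero => simp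
  | succ k ih =>
    rw [← rotate_rotate l k 1, mul_add_one, ← rotate_rotate (mu l), ← ih]
    cases l.rotate k <;> simp [mu]

theorem isRotated_mu {l l' : List Bool} (h : l ~r l') : mu l ~r mu l' := by
  obtain ⟨k, rfl⟩ := h
  exact ⟨2 * k, (mu_rotate l k).symm⟩

theorem mu_iterate_append (i : ℕ) (l l' : List Bool) :
    mu^[i] (l ++ l') = mu^[i] l ++ mu^[i] l' :=
  Function.Semiconj₂.iterate mu_append i l l'

theorem length_mu_iterate (i : ℕ) (l : List Bool) : (mu^[i] l).length = 2 ^ i * l.length := by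
  induction i with
  | zero => simp
  | succ i ih => rw [Function.iterate_succ_apply', length_mu, ih, pow_succ]; ring

theorem eq_iff_even_of_forall_ne {f : ℕ → Bool} {s k : ℕ}
    (h : ∀ i < k, f (s + i + 1) ≠ f (s + i)) : f (s + k) = f s ↔ Even k := by
  induction k with
  | zero => simp
  | succ k ih =>
    rw [← add_assoc, Nat.even_add_one, ← ih fun i hi => h i (by omega)]
    rw [Bool.eq_not.2 (h k (by omega)), Bool.not_eq]

theorem not_overlapAt_mu_of_odd {l : List Bool} {s p : ℕ} (hp : Odd p)
    (hs : s + 2 * p < (mu l).length) : ¬ OverlapAt ((mu l).getD · false) s p := by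
  intro hov
  by_cases hdouble :
      ∃ j, s ≤ j ∧ j < s + p ∧ (mu l).getD (j + 1) false = (mu l).getD j false
  · obtain ⟨j, hsj, hjs, hj⟩ := hdouble
    have hjp : (mu l).getD (j + p + 1) false = (mu l).getD (j + p) false := by
      have h₁ := hov (j - s) (by omega)
      have h₂ := hov (j - s + 1) (by omega)
      simp only [show s + (j - s) = j by omega, show s + (j - s + 1) = j + 1 by omega,
        show j + 1 + p = j + p + 1 by omega] at h₁ h₂
      rw [← h₁, ← h₂, hj]
    rcases Nat.even_or_odd j with hj_even | hj_odd
    · exact getD_mu_succ_ne hj_even (by omega) hj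
    · exact getD_mu_succ_ne (hj_odd.add_odd hp) (by omega) hjp
  · push Not at hdouble
    have halt := eq_iff_even_of_forall_ne (f := ((mu l).getD · false)) (s := s) (k := p)
      fun i hi => hdouble (s + i) (by omega) (by omega)
    have h₀ := hov 0 (by omega)
    simp only [add_zero] at h₀ halt
    exact Nat.not_even_iff_odd.2 hp (halt.1 h₀.symm)

theorem OverlapAt.of_mu_two_mul {l : List Bool} {s q : ℕ}
    (h : OverlapAt ((mu l).getD · false) (2 * s) (2 * q)) : OverlapAt (l.getD · false) s q :=
  fun i hi => by
    have h' := h (2 * i) (by omega)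
    simp only at h' ⊢
    rwa [← mul_add, ← mul_add, getD_mu_two_mul, getD_mu_two_mul] at h'

theorem OverlapAt.mu_pred {l : List Bool} {s p : ℕ} (hs : Odd s) (hp : Even p)
    (hlen : s + p < (mu l).length) (h : OverlapAt ((mu l).getD · false) s p) :
    OverlapAt ((mu l).getD · false) (s - 1) p := by
  obtain ⟨σ, rfl⟩ := hs
  intro i hi
  cases i with
  | zero =>
    have h₁ := getD_mu_succ_ne (l := l) (j := 2 * σ) (even_two_mul σ) (by omega)
    have h₂ := getD_mu_succ_ne (l := l) (j := 2 * σ + p) ((even_two_mul σ).add hp) (by omega)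
    have h₀ := h 0 (by omega)
    simp only [add_zero, show 2 * σ + p + 1 = 2 * σ + 1 + p by omega] at h₀ h₁ h₂ ⊢
    simp only [Nat.add_sub_cancel]
    rw [Bool.eq_not.2 h₁.symm, Bool.eq_not.2 h₂.symm, h₀]
  | succ i =>
    simpa only [show 2 * σ + 1 - 1 + (i + 1) = 2 * σ + 1 + i by omega] using h i (by omega)

theorem overlapFree_mu {l : List Bool} (h : OverlapFree l) : OverlapFree (mu l) := by
  rw [overlapFree_iff_forall_not_overlapAt] at h ⊢
  intro s p hp hs hov
  rcases Nat.even_or_odd p with hp_even | hp_odd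
  · obtain ⟨q, rfl⟩ := hp_even.two_dvd
    obtain ⟨σ, hσs, hσ⟩ :
        ∃ σ, 2 * σ ≤ s ∧ OverlapAt ((mu l).getD · false) (2 * σ) (2 * q) := by
      obtain ⟨σ, rfl | rfl⟩ := Nat.even_or_odd' s
      · exact ⟨σ, le_rfl, hov⟩
      · exact ⟨σ, by omega, hov.mu_pred (odd_two_mul_add_one σ) hp_even (by omega)⟩
    exact h σ q (by omega) (by simp at hs; omega) hσ.of_mu_two_mul
  · exact not_overlapAt_mu_of_odd hp_odd hs hov

theorem overlapFree_of_overlapFree_dropLast_mu {z : List Bool}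
    (h : OverlapFree (mu z).dropLast) : OverlapFree z := by
  rintro f ⟨l, r, rfl⟩ ⟨a, x, rfl⟩
  refine h ([a] ++ ((!a) :: mu x) ++ [a] ++ ((!a) :: mu x) ++ [a])
    ⟨mu l, ((!a) :: mu r).dropLast, ?_⟩ ⟨a, _, rfl⟩
  simp [mu_append, mu_cons, ← dropLast_append_cons]

def OverlapFreeUpTo (f : ℕ → Bool) (m : ℕ) : Prop :=
  ∀ s p, 0 < p → p ≤ m → ¬ OverlapAt f s p

namespace OverlapFreeUpTo

variable {f : ℕ → Bool}

theorem succ_ne_of_eq (hf : OverlapFreeUpTo f 3) {i : ℕ} (h : f (i + 1) = f i) :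
    f (i + 2) ≠ f (i + 1) := fun h' =>
  hf i 1 one_pos (by norm_num) fun k hk => by
    interval_cases k
    · exact h.symm
    · exact h'.symm

theorem exists_eq_succ (hf : OverlapFreeUpTo f 3) (i : ℕ) :
    ∃ k < 4, f (i + k + 1) = f (i + k) := by
  by_contra! h
  refine hf i 2 two_pos (by norm_num) fun k hk => ?_
  have h' := h (k + 1) (by omega)
  rw [← add_assoc] at h'
  exact Bool.eq_of_ne_of_ne (h k (by omega)).symm h'.symm

theorem ne_add_three_of_eq (hf : OverlapFreeUpTo f 3) {i : ℕ} (hi : 0 < i)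
    (h₁ : f (i + 1) = f i) : f (i + 4) ≠ f (i + 3) := fun h₄ => by
  obtain ⟨i, rfl⟩ := Nat.exists_eq_add_one_of_ne_zero hi.ne'
  have h₀ : f (i + 1) ≠ f i := fun h => hf.succ_ne_of_eq h h₁
  have h₂ : f (i + 3) ≠ f (i + 2) := hf.succ_ne_of_eq h₁
  have h₃ : f (i + 4) ≠ f (i + 3) := fun h => hf.succ_ne_of_eq h h₄
  have h₅ : f (i + 6) ≠ f (i + 5) := hf.succ_ne_of_eq h₄
  refine hf i 3 (by norm_num) le_rfl fun k hk => ?_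
  interval_cases k
  · exact Bool.eq_of_ne_of_ne h₀.symm (h₁ ▸ h₂.symm)
  · exact h₁ ▸ Bool.eq_of_ne_of_ne h₂.symm h₃.symm
  · exact h₄ ▸ Bool.eq_of_ne_of_ne h₂.symm h₃.symm
  · exact Bool.eq_of_ne_of_ne (h₄ ▸ h₃.symm) h₅.symm

/-- After a pair of equal letters at a position `i > 0`, the next such pair comes two or four
letters later; hence all such pairs start at positions of the same parity. -/
theorem even_sub (hf : OverlapFreeUpTo f 3) {i j : ℕ} (hi : 0 < i) (hij : i ≤ j)
    (hdi : f (i + 1) = f i) (hdj : f (j + 1) = f j) : Even (j - i) := by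
  induction hd : j - i using Nat.strong_induction_on generalizing i with
  | _ d ih =>
  have h₁ : f (i + 2) ≠ f (i + 1) := hf.succ_ne_of_eq hdi
  have h₃ : f (i + 4) ≠ f (i + 3) := hf.ne_add_three_of_eq hi hdi
  obtain hd4 | hd4 := lt_or_ge d 4
  · interval_cases d
    · exact Even.zero
    · obtain rfl : j = i + 1 := by omega
      exact absurd hdj h₁
    · exact even_two
    · obtain rfl : j = i + 3 := by omega
      exact absurd hdj h₃
  obtain ⟨k, hk, hdk⟩ := hf.exists_eq_succ (i + 1)
  interval_cases k
  · exact absurd hdk h₁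
  · have := ih (d - 2) (by omega) (by omega) (by omega) hdk (by omega)
    exact ((Nat.even_sub (by omega)).1 this).2 even_two
  · exact absurd hdk h₃
  · have := ih (d - 4) (by omega) (by omega) (by omega) hdk (by omega)
    exact ((Nat.even_sub (by omega)).1 this).2 (by decide)

theorem mod_two_eq (hf : OverlapFreeUpTo f 3) {i j : ℕ} (hi : 0 < i) (hj : 0 < j)
    (hdi : f (i + 1) = f i) (hdj : f (j + 1) = f j) : i % 2 = j % 2 := by
  rcases le_total i j with hij | hji
  · have := hf.even_sub hi hij hdi hdj
    rw [Nat.even_sub hij, Nat.even_iff, Nat.even_iff] at this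
    omega
  · have := hf.even_sub hj hji hdj hdi
    rw [Nat.even_sub hji, Nat.even_iff, Nat.even_iff] at this
    omega

end OverlapFreeUpTo

def cyclicWord (x : List Bool) (i : ℕ) : Bool := x.getD (i % x.length) false

theorem cyclicWord_add_length (x : List Bool) (i : ℕ) :
    cyclicWord x (i + x.length) = cyclicWord x i := by
  simp [cyclicWord]

theorem getD_append_self_eq_cyclicWord {x : List Bool} {i : ℕ} (hi : i < 2 * x.length) :
    (x ++ x).getD i false = cyclicWord x i := by
  rcases lt_or_ge i x.length with h | h
  · rw [getD_append _ _ _ _ h, cyclicWord, Nat.mod_eq_of_lt h]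
  · rw [getD_append_right _ _ _ _ h, cyclicWord, Nat.mod_eq_sub_mod h,
      Nat.mod_eq_of_lt (by omega)]

theorem getD_rotate_eq_cyclicWord {x : List Bool} {i : ℕ} (r : ℕ) (hi : i < x.length) :
    (x.rotate r).getD i false = cyclicWord x (i + r) := by
  rw [getD_eq_getElem _ _ (by simpa), getElem_rotate, cyclicWord,
    getD_eq_getElem _ _ (Nat.mod_lt _ (by omega))]

theorem overlapFreeUpTo_cyclicWord {x : List Bool} {m : ℕ} (h : OverlapFree (x ++ x))
    (hm : 2 * m ≤ x.length) : OverlapFreeUpTo (cyclicWord x) m := by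
  intro s p hp hpm hov
  rw [overlapFree_iff_forall_not_overlapAt] at h
  have hs : s % x.length < x.length := Nat.mod_lt _ (by omega)
  refine h (s % x.length) p hp (by simp; omega) fun i hi => ?_
  simp only
  rw [getD_append_self_eq_cyclicWord (by omega), getD_append_self_eq_cyclicWord (by omega)]
  simpa only [cyclicWord, add_assoc, Nat.mod_add_mod] using hov i hi

theorem exists_mu_eq : ∀ {l : List Bool}, Even l.length →
    (∀ j, 2 * j + 1 < l.length → l.getD (2 * j + 1) false ≠ l.getD (2 * j) false) →
    ∃ y, mu y = l
  | [], _, _ => ⟨[], rfl⟩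
  | [_], heven, _ => by simp at heven
  | a :: b :: l, heven, halt => by
    obtain ⟨y, hy⟩ := exists_mu_eq (l := l) (by simpa [Nat.even_add_one] using heven)
      fun j hj => by simpa [Nat.mul_succ] using halt (j + 1) (by simp; omega)
    refine ⟨a :: y, ?_⟩
    have hb : b = !a := Bool.eq_not.2 (by simpa using halt 0 (by simp))
    rw [mu_cons, hy, hb]

theorem exists_rotate_eq_mu {x : List Bool} (hx : 6 ≤ x.length) (h : OverlapFree (x ++ x)) :
    ∃ r ≤ 1, ∃ y, mu y = x.rotate r := by
  have hf := overlapFreeUpTo_cyclicWord (m := 3) h hx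
  obtain ⟨k, -, hk⟩ := hf.exists_eq_succ x.length
  have hparity : ∀ j, cyclicWord x (j + 1) = cyclicWord x j →
      (j + x.length) % 2 = (x.length + k) % 2 := fun j hj =>
    hf.mod_two_eq (by omega) (by omega)
      (by rwa [add_right_comm, cyclicWord_add_length, cyclicWord_add_length]) hk
  have heven : Even x.length := by
    have := hparity (x.length + k) hk
    rw [Nat.even_iff]
    omega
  refine ⟨(x.length + k + 1) % 2, by omega, exists_mu_eq (by simpa using heven) fun j hj => ?_⟩
  rw [length_rotate] at hj
  rw [getD_rotate_eq_cyclicWord _ hj, getD_rotate_eq_cyclicWord _ (by omega)]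
  intro hj'
  have := hparity _ (by rwa [add_right_comm])
  have := Nat.even_iff.1 heven
  omega

theorem exists_shorter_of_overlapFree_append_self {x : List Bool} (hx : 6 ≤ x.length)
    (h : OverlapFree (x ++ x)) :
    ∃ y, y.length < x.length ∧ y ≠ [] ∧ OverlapFree (y ++ y) ∧ mu y ~r x := by
  obtain ⟨r, hr, y, hy⟩ := exists_rotate_eq_mu hx h
  have hlen : 2 * y.length = x.length := by simpa using congrArg length hy
  refine ⟨y, by omega, by rintro rfl; simp at hlen; omega, ?_, hy ▸ IsRotated.forall x r⟩
  apply overlapFree_of_overlapFree_dropLast_mu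
  rw [mu_append, hy, ← rotate_append_self]
  exact h.of_infix (dropLast_rotate_infix _ hr)

/-- The words whose squares are the base cases `00`, `11`, `010010`, `101101`. -/
def seeds : List (List Bool) := [[false], [true], [false, true, false], [true, false, true]]

theorem ne_nil_of_mem_seeds {c : List Bool} (hc : c ∈ seeds) : c ≠ [] := by
  revert c hc
  decide

theorem mem_sections_replicate (x : List Bool) :
    x ∈ (replicate x.length [false, true]).sections := by
  rw [mem_sections]
  induction x with
  | nil => exact Forall₂.nil
  | cons b x ih => exact Forall₂.cons (by cases b <;> simp) ih

theorem exists_seed_isRotated_of_length_lt_six :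
    ∀ x ∈ (range 6).flatMap fun n => (replicate n [false, true]).sections,
      x ≠ [] → OverlapFree (x ++ x) → ∃ i < 3, ∃ c ∈ seeds, mu^[i] c ~r x := by
  decide

theorem exists_seed_isRotated {x : List Bool} (hx : x ≠ []) (h : OverlapFree (x ++ x)) :
    ∃ i, ∃ c ∈ seeds, mu^[i] c ~r x := by
  induction hn : x.length using Nat.strong_induction_on generalizing x with
  | _ n ih =>
  obtain hn6 | hn6 := lt_or_ge n 6
  · obtain ⟨i, -, hc⟩ := exists_seed_isRotated_of_length_lt_six x
      (mem_flatMap.2 ⟨n, mem_range.2 hn6, hn ▸ mem_sections_replicate x⟩) hx h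
    exact ⟨i, hc⟩
  · obtain ⟨y, hyx, hy, hyy, hyx'⟩ := exists_shorter_of_overlapFree_append_self (hn ▸ hn6) h
    obtain ⟨i, c, hc, hcy⟩ := ih _ (hn ▸ hyx) hy hyy rfl
    refine ⟨i + 1, c, hc, ?_⟩
    rw [Function.iterate_succ_apply']
    exact (isRotated_mu hcy).trans hyx'

def CircularlyOverlapFree (z : List Bool) : Prop := ∀ k, OverlapFree (z.rotate k)

/-- A factor of `(μ z).rotate 1` lies in `μ z` or in `μ (z.rotate 1)`, unless it is the whole
word, which has even length. -/
theorem overlapFree_rotate_one_mu {z : List Bool} (h₁ : OverlapFree (mu z))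
    (h₂ : OverlapFree (mu (z.rotate 1))) : OverlapFree ((mu z).rotate 1) := by
  cases z with
  | nil => simpa [mu] using h₁
  | cons a t =>
    have hz : (mu (a :: t)).rotate 1 = (!a) :: (mu t ++ [a]) := by simp [mu_cons]
    rw [hz]
    intro f hf hov
    rcases infix_cons_iff.1 hf with hf | hf
    · rw [← cons_append, prefix_concat_iff] at hf
      rcases hf with rfl | hf
      · simpa [Nat.odd_add_one, parity_simps] using hov.odd_length
      · exact h₁ f (hf.isInfix.trans (suffix_cons a _).isInfix) hov
    · have hz' : mu ((a :: t).rotate 1) = (mu t ++ [a]) ++ [!a] := by simp [mu]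
      exact h₂ f (hf.trans (hz' ▸ (prefix_append _ _).isInfix)) hov

theorem circularlyOverlapFree_mu {z : List Bool} (h : CircularlyOverlapFree z) :
    CircularlyOverlapFree (mu z) := by
  intro k
  obtain ⟨j, rfl | rfl⟩ := Nat.even_or_odd' k
  · rw [← mu_rotate]
    exact overlapFree_mu (h j)
  · rw [← rotate_rotate, ← mu_rotate]
    refine overlapFree_rotate_one_mu (overlapFree_mu (h j)) ?_
    rw [rotate_rotate]
    exact overlapFree_mu (h _)

theorem circularlyOverlapFree_mu_iterate {z : List Bool} (h : CircularlyOverlapFree z)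
    (i : ℕ) :
    CircularlyOverlapFree (mu^[i] z) := by
  induction i with
  | zero => exact h
  | succ i ih => rw [Function.iterate_succ_apply']; exact circularlyOverlapFree_mu ih

theorem circularlyOverlapFree_append_self_of_mem_seeds {c : List Bool} (hc : c ∈ seeds) :
    CircularlyOverlapFree (c ++ c) := by
  have hrot : ∀ c ∈ seeds, ∀ k < (c ++ c).length, OverlapFree ((c ++ c).rotate k) := by decide
  intro k
  rw [← rotate_mod]
  exact hrot c hc _ (Nat.mod_lt _ (by simpa using length_pos_iff.2 (ne_nil_of_mem_seeds hc)))

theorem stmt_5 (w : List Bool) :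
    (OverlapFree w ∧ ∃ x : List Bool, x ≠ [] ∧ w = x ++ x) ↔
      ∃ (i : ℕ) (x : List Bool),
        x ∈ [[false, false], [true, true],
              [false, true, false, false, true, false],
              [true, false, true, true, false, true]] ∧
        ∃ u v : List Bool, mu^[i] x = u ++ v ∧ w = v ++ u := by
  rw [show [[false, false], [true, true], [false, true, false, false, true, false],
    [true, false, true, true, false, true]] = seeds.map fun c => c ++ c from rfl]
  constructor
  · rintro ⟨hw, x, hx, rfl⟩
    obtain ⟨i, c, hc, k, hk⟩ := exists_seed_isRotated hx hw
    have hrot : (mu^[i] (c ++ c)).rotate k = x ++ x := by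
      rw [mu_iterate_append, rotate_append_self, hk]
    set L := mu^[i] (c ++ c)
    refine ⟨i, c ++ c, mem_map_of_mem hc, _, _, (take_append_drop (k % L.length) L).symm, ?_⟩
    rw [← hrot, rotate_eq_drop_append_take_mod]
  · rintro ⟨i, _, hx, u, v, huv, rfl⟩
    obtain ⟨c, hc, rfl⟩ := mem_map.1 hx
    have hrot : v ++ u = (mu^[i] (c ++ c)).rotate u.length := by
      rw [huv, rotate_append_length_eq]
    refine ⟨hrot ▸ circularlyOverlapFree_mu_iterate
      (circularlyOverlapFree_append_self_of_mem_seeds hc) i _, (mu^[i] c).rotate u.length, ?_,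
      by rw [hrot, mu_iterate_append, rotate_append_self]⟩
    rw [Ne, rotate_eq_nil_iff, ← length_eq_zero_iff, length_mu_iterate]
    simpa using ne_nil_of_mem_seeds hc
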